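/- arXiv:1005.5273 — 3 statements merged into one kernel-verified Lean document; each statement's English description precedes it below -/
import Mathlib

section
/- Let I be a holonomic left ideal in the Weyl algebra D = C⟨x_1,…,x_d, ∂_1,…,∂_d⟩, i.e., dim_C F_k/(F_k ∩ I) = O(k^d) for the Bernstein filtration F_k. Let V be any subset of size d+1 of {x_1,…,x_d, ∂_1,…,∂_d}. Then the elimination ideal I ∩ C⟨V⟩ contains a nonzero element. -/
open MvPolynomial

/-- Holonomic elimination (Lemma A.1): let `D = C⟨x_1,…,x_d,∂_1,…,∂_d⟩` be the Weyl
algebra, identified as a `ℂ`-vector space (via its PBW basis of normally ordered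
monomials) with `MvPolynomial (Fin d ⊕ Fin d) ℂ`, and let `F_k` be the Bernstein
filtration (total degree ≤ k).  If `I` is a holonomic left ideal, i.e.
`dim_ℂ F_k/(F_k ∩ I) = O(k^d)`, and `V` is a set of `d+1` of the `2d` generators,
then the elimination ideal `I ∩ C⟨V⟩` contains a nonzero element. -/
theorem holonomic_elimination (d : ℕ)
    (I : Submodule ℂ (MvPolynomial (Fin d ⊕ Fin d) ℂ))
    (hol : ∃ C : ℝ, ∀ᶠ k : ℕ in Filter.atTop,
      (Module.finrank ℂ
        (↥(restrictTotalDegree (Fin d ⊕ Fin d) ℂ k) ⧸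
          I.comap (restrictTotalDegree (Fin d ⊕ Fin d) ℂ k).subtype) : ℝ)
        ≤ C * (k : ℝ) ^ d)
    (V : Finset (Fin d ⊕ Fin d)) (hV : V.card = d + 1) :
    ∃ p : MvPolynomial (Fin d ⊕ Fin d) ℂ, p ≠ 0 ∧ p ∈ I ∧
      p ∈ MvPolynomial.supported ℂ (↑V : Set (Fin d ⊕ Fin d)) := by
  classical
  by_contra hcon
  push_neg at hcon
  obtain ⟨C₀, hC₀⟩ := hol
  set C : ℝ := max C₀ 1 with hCdef
  have hC1 : (1:ℝ) ≤ C := le_max_right _ _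
  have hC0 : (0:ℝ) ≤ C := by linarith
  rw [Filter.eventually_atTop] at hC₀
  obtain ⟨N, hN⟩ := hC₀
  set m : ℕ := N + ⌈C * ((d:ℝ)+1)^d⌉₊ with hm
  set k : ℕ := (d+1) * m with hk
  have hmk : m ≤ k := Nat.le_mul_of_pos_left m (Nat.succ_pos d)
  have hkN : N ≤ k := le_trans (Nat.le_add_right _ _) hmk
  -- the exponent map
  let e : (↥V → Fin (m+1)) → ((Fin d ⊕ Fin d) →₀ ℕ) := fun g =>
    Finsupp.equivFunOnFinite.symm (fun s => if h : s ∈ V then (g ⟨s, h⟩ : ℕ) else 0)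
  have he_apply : ∀ g s, e g s = if h : s ∈ V then (g ⟨s, h⟩ : ℕ) else 0 := fun g s => rfl
  have he_inj : Function.Injective e := by
    intro g g' h
    funext v
    have h2 := DFunLike.congr_fun h (v : Fin d ⊕ Fin d)
    rw [he_apply, he_apply, dif_pos v.2, dif_pos v.2] at h2
    exact Fin.val_injective h2
  have he_supp : ∀ g, (e g).support ⊆ V := by
    intro g s hs
    by_contra hsv
    exact (Finsupp.mem_support_iff.mp hs) (by rw [he_apply, dif_neg hsv])
  have he_deg : ∀ g, ((e g).sum fun _ n => n) ≤ k := by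
    intro g
    rw [Finsupp.sum]
    calc ∑ s ∈ (e g).support, e g s ≤ ∑ s ∈ V, e g s :=
          Finset.sum_le_sum_of_subset (he_supp g)
      _ ≤ ∑ _s ∈ V, m := Finset.sum_le_sum (fun s hs => by
          rw [he_apply, dif_pos hs]; exact Nat.lt_succ_iff.mp (g ⟨s, hs⟩).isLt)
      _ = (d+1) * m := by rw [Finset.sum_const, hV, smul_eq_mul]
  have hmemW : ∀ g, (monomial (e g) (1:ℂ)) ∈ restrictTotalDegree (Fin d ⊕ Fin d) ℂ k := by
    intro g
    rw [mem_restrictTotalDegree, totalDegree_monomial _ (one_ne_zero)]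
    exact he_deg g
  have hmemS : ∀ g, (monomial (e g) (1:ℂ)) ∈ supported ℂ (↑V : Set (Fin d ⊕ Fin d)) := by
    intro g
    rw [mem_supported, vars_monomial (one_ne_zero)]
    exact_mod_cast Finset.coe_subset.mpr (he_supp g)
  have hli : LinearIndependent ℂ (fun g : ↥V → Fin (m+1) => monomial (e g) (1:ℂ)) := by
    have := ((MvPolynomial.basisMonomials (Fin d ⊕ Fin d) ℂ).linearIndependent).comp e he_inj
    simpa [Function.comp_def, coe_basisMonomials] using this
  set W := restrictTotalDegree (Fin d ⊕ Fin d) ℂ k with hW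
  set J := I.comap W.subtype with hJ
  let w : (↥V → Fin (m+1)) → W := fun g => ⟨monomial (e g) (1:ℂ), hmemW g⟩
  have hwli : LinearIndependent ℂ w := by
    apply LinearIndependent.of_comp W.subtype
    exact hli
  have hdisj : Disjoint (Submodule.span ℂ (Set.range w)) (LinearMap.ker J.mkQ) := by
    rw [Submodule.ker_mkQ, Submodule.disjoint_def]
    intro u hu huJ
    have hspan : Submodule.span ℂ (Set.range w)
        ≤ Submodule.comap W.subtype
            (Subalgebra.toSubmodule (supported ℂ (↑V : Set (Fin d ⊕ Fin d)))) := by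
      rw [Submodule.span_le]
      rintro _ ⟨g, rfl⟩
      exact hmemS g
    have hsupp : (u : MvPolynomial (Fin d ⊕ Fin d) ℂ)
        ∈ supported ℂ (↑V : Set (Fin d ⊕ Fin d)) := hspan hu
    have huI : (u : MvPolynomial (Fin d ⊕ Fin d) ℂ) ∈ I := huJ
    have : (u : MvPolynomial (Fin d ⊕ Fin d) ℂ) = 0 := by
      by_contra h
      exact hcon _ h huI hsupp
    exact Subtype.ext this
  have hqli : LinearIndependent ℂ (⇑J.mkQ ∘ w) := hwli.map hdisj
  have hcard := hqli.fintype_card_le_finrank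
  have hcardι : Fintype.card (↥V → Fin (m+1)) = (m+1)^(d+1) := by
    rw [Fintype.card_fun, Fintype.card_fin, Fintype.card_coe, hV]
  -- numeric contradiction
  have hceil : C * ((d:ℝ)+1)^d < (m:ℝ) + 1 := by
    have h1 := Nat.le_ceil (C * ((d:ℝ)+1)^d)
    have h2 : ((⌈C * ((d:ℝ)+1)^d⌉₊ : ℕ) : ℝ) ≤ (m:ℝ) := by
      have h3 : ⌈C * ((d:ℝ)+1)^d⌉₊ ≤ m := by rw [hm]; exact Nat.le_add_left _ N
      exact_mod_cast h3
    linarith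
  have key : C * (k:ℝ)^d < ((m:ℝ)+1)^(d+1) := by
    have hk' : (k:ℝ) = ((d:ℝ)+1) * m := by rw [hk]; push_cast; ring
    rw [hk', mul_pow, ← mul_assoc]
    calc C * ((d:ℝ)+1)^d * (m:ℝ)^d ≤ C * ((d:ℝ)+1)^d * ((m:ℝ)+1)^d := by
          apply mul_le_mul_of_nonneg_left
            (pow_le_pow_left₀ (by positivity) (by linarith) d) (by positivity)
      _ < ((m:ℝ)+1) * ((m:ℝ)+1)^d :=
          mul_lt_mul_of_pos_right hceil (by positivity)
      _ = ((m:ℝ)+1)^(d+1) := by ring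
  have hQ : (Module.finrank ℂ (↥W ⧸ J) : ℝ) ≤ C * (k:ℝ)^d := by
    refine le_trans (hN k hkN) ?_
    have : (k:ℝ)^d ≥ 0 := by positivity
    nlinarith [le_max_left C₀ (1:ℝ)]
  have hlow : (((m+1)^(d+1) : ℕ) : ℝ) ≤ (Module.finrank ℂ (↥W ⧸ J) : ℝ) := by
    exact_mod_cast hcardι ▸ hcard
  have : (((m+1)^(d+1) : ℕ) : ℝ) = ((m:ℝ)+1)^(d+1) := by push_cast; ring
  linarith [this ▸ hlow]
end

section
/- In the rational Weyl algebra R = C(X)⟨∂_X⟩ with X = {x_ij (i≤j), y_i, r}, let I be the left ideal generated by the operators A_ij = ∂_{x_ij} − ∂_{y_i}∂_{y_j}, B = Σ_i ∂_{y_i}² − r², C_ij (the rotation operators), and E = r∂_r − 2Σ_{i≤j} x_ij ∂_{y_i}∂_{y_j} − Σ_i y_i ∂_{y_i} − n. Then every element of R is congruent modulo I to a C(X)-linear combination of the 2n+3 monomials {1, ∂_{y_1},…,∂_{y_{n+1}}, ∂_{y_1}²,…,∂_{y_n}²}; in particular I is zero-dimensional with dim_{C(X)} R/I ≤ 2n+3.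 -/
/-! Theorem 4.2 of the paper: zero-dimensionality of the Fisher–Bingham system in the
rational Weyl algebra `R = C(X)⟨∂_X⟩`, `X = {x_ij (i≤j), y_i, r}`.  We parametrize:
`K` is the rational function field `C(X)`, `D v` is the partial derivative `∂/∂v` on `K`,
and `R` is the rational Weyl algebra, given by a ring together with the inclusion
`σ : K → R`, the generators `δ v = ∂_v`, the commutation relations, and the fact that
`R` is spanned by the normally ordered monomials `a ∂^β`. -/

namespace FisherBinghamWeyl

/-- Index type for the variables `x_ij (i ≤ j)`, `y_i`, `r`. -/
def Var (n : ℕ) : Type := {p : Fin (n+1) × Fin (n+1) // p.1 ≤ p.2} ⊕ (Fin (n+1)) ⊕ Unit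

instance (n : ℕ) : Fintype (Var n) := by unfold Var; infer_instance
instance (n : ℕ) : DecidableEq (Var n) := by unfold Var; infer_instance

variable {n : ℕ}

/-- The index of the variable `y_i`. -/
def yIdx (i : Fin (n+1)) : Var n := Sum.inr (Sum.inl i)

/-- The index of the variable `r`. -/
def rIdx : Var n := Sum.inr (Sum.inr ())

/-- The index of the variable `x_ij`, with the symmetric convention `x_kl = x_lk`. -/
def xIdx (i j : Fin (n+1)) : Var n :=
  if h : i ≤ j then Sum.inl ⟨(i, j), h⟩ else Sum.inl ⟨(j, i), (not_le.mp h).le⟩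

variable {K : Type} [Field K] [Algebra (MvPolynomial (Var n) ℂ) K]

/-- The variable `x_ij` as a rational function. -/
noncomputable def xK (i j : Fin (n+1)) : K := algebraMap (MvPolynomial (Var n) ℂ) K
  (MvPolynomial.X (xIdx i j))

/-- The variable `y_i` as a rational function. -/
noncomputable def yK (i : Fin (n+1)) : K := algebraMap (MvPolynomial (Var n) ℂ) K
  (MvPolynomial.X (yIdx i))

/-- The variable `r` as a rational function. -/
noncomputable def rK (n : ℕ) (K : Type) [Field K] [Algebra (MvPolynomial (Var n) ℂ) K] :
    K := algebraMap (MvPolynomial (Var n) ℂ) K (MvPolynomial.X (rIdx : Var n))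

variable {R : Type} [Ring R]

/-- The operator `A_ij = ∂_{x_ij} − ∂_{y_i}∂_{y_j}`. -/
def Aop (σ : K →+* R) (δ : Var n → R) (p : {p : Fin (n+1) × Fin (n+1) // p.1 ≤ p.2}) : R :=
  δ (Sum.inl p) - δ (yIdx p.1.1) * δ (yIdx p.1.2)

/-- The operator `B = Σ_i ∂_{y_i}² − r²`. -/
noncomputable def Bop (σ : K →+* R) (δ : Var n → R) : R :=
  (∑ i, δ (yIdx i) * δ (yIdx i)) - σ (rK n K * rK n K)

/-- The rotation operator `C_ij`. -/
noncomputable def Cop (σ : K →+* R) (δ : Var n → R) (i j : Fin (n+1)) : R :=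
  σ (2 * (xK j j - xK i i)) * (δ (yIdx i) * δ (yIdx j))
    + σ (xK i j) * (δ (yIdx i) * δ (yIdx i))
    - σ (xK i j) * (δ (yIdx j) * δ (yIdx j))
    + ∑ k ∈ (Finset.univ \ {i, j}),
        (σ (xK j k) * (δ (yIdx i) * δ (yIdx k)) - σ (xK i k) * (δ (yIdx j) * δ (yIdx k)))
    + σ (yK j) * δ (yIdx i) - σ (yK i) * δ (yIdx j)

/-- The Euler operator `E = r∂_r − 2Σ_{i≤j} x_ij ∂_{y_i}∂_{y_j} − Σ_i y_i ∂_{y_i} − n`. -/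
noncomputable def Eop (σ : K →+* R) (δ : Var n → R) : R :=
  σ (rK n K) * δ rIdx
    - (2 : R) * ∑ p : {p : Fin (n+1) × Fin (n+1) // p.1 ≤ p.2},
        σ (xK p.1.1 p.1.2) * (δ (yIdx p.1.1) * δ (yIdx p.1.2))
    - ∑ i, σ (yK i) * δ (yIdx i) - (n : R)

/-! ### Auxiliary development -/

section Facts

lemma xIdx_symm (i j : Fin (n+1)) : (xIdx i j : Var n) = xIdx j i := by
  unfold xIdx
  rcases le_or_gt i j with h | h
  · rcases eq_or_lt_of_le h with rfl | h'
    · rfl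
    · exact (dif_pos h).trans (dif_neg (not_le.mpr h') (t := fun hh => (Sum.inl ⟨(j, i), hh⟩ : Var n)) (e := fun hh => (Sum.inl ⟨(i, j), (not_le.mp hh).le⟩ : Var n))).symm
  · exact (dif_neg (not_le.mpr h)).trans (dif_pos h.le (t := fun hh => (Sum.inl ⟨(j, i), hh⟩ : Var n)) (e := fun hh => (Sum.inl ⟨(i, j), (not_le.mp hh).le⟩ : Var n))).symm

lemma xIdx_ne_yIdx (i j m : Fin (n+1)) : (yIdx m : Var n) ≠ xIdx i j := by
  intro h
  by_cases hh : i ≤ j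
  · have h2 : (Sum.inr (Sum.inl m) : Var n) = Sum.inl ⟨(i, j), hh⟩ := h.trans (dif_pos hh)
    injection h2
  · have h2 : (Sum.inr (Sum.inl m) : Var n) = Sum.inl ⟨(j, i), (not_le.mp hh).le⟩ :=
      h.trans (dif_neg hh)
    injection h2

lemma rIdx_ne_yIdx (m : Fin (n+1)) : (yIdx m : Var n) ≠ rIdx := by
  intro h
  injection h with h1
  injection h1

lemma yIdx_inj {i j : Fin (n+1)} : (yIdx i : Var n) = yIdx j ↔ i = j := by
  constructor
  · intro h
    injection h with h1
    injection h1 with h2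
  · rintro rfl; rfl

lemma xK_symm (i j : Fin (n+1)) : (xK i j : K) = xK j i := by
  rw [xK, xK, xIdx_symm]

end Facts

section Poly

/-- Strictly increasing pairs. -/
abbrev SP (n : ℕ) := {p : Fin (n+1) × Fin (n+1) // p.1 < p.2}

/-- Coefficient polynomials for the second order part of `Cop`. -/
noncomputable def SA (n : ℕ) (p : SP n) (a b : Fin (n+1)) : MvPolynomial (Var n) ℂ :=
  (if b = p.1.1 then MvPolynomial.X (xIdx a p.1.2) else 0)
  - (if b = p.1.2 then MvPolynomial.X (xIdx a p.1.1) else 0)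
  + (if a = p.1.1 then (if b = p.1.2 then
      MvPolynomial.X (xIdx p.1.2 p.1.2) - MvPolynomial.X (xIdx p.1.1 p.1.1) else 0) else 0)

noncomputable def GA (n : ℕ) (p q : SP n) : MvPolynomial (Var n) ℂ :=
  SA n p q.1.1 q.1.2 + SA n p q.1.2 q.1.1

noncomputable def sA (n : ℕ) (p : SP n) (c : Fin (n+1)) : MvPolynomial (Var n) ℂ :=
  SA n p c c

/-- `SA` as an element of `K`. -/
noncomputable def SK (p : SP n) (a b : Fin (n+1)) : K :=
  algebraMap (MvPolynomial (Var n) ℂ) K (SA n p a b)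

lemma SK_eq (p : SP n) (a b : Fin (n+1)) : (SK p a b : K) =
    (if b = p.1.1 then xK a p.1.2 else 0)
    - (if b = p.1.2 then xK a p.1.1 else 0)
    + (if a = p.1.1 then (if b = p.1.2 then
        xK p.1.2 p.1.2 - xK p.1.1 p.1.1 else 0) else 0) := by
  simp only [SK, SA, map_add, map_sub, apply_ite (algebraMap (MvPolynomial (Var n) ℂ) K),
    map_zero, xK]

end Poly

section Sums

set_option maxHeartbeats 1000000 in
/-- Splitting a double sum into strict pairs and a diagonal. -/
lemma sum_split {M : Type*} [AddCommMonoid M] (m : ℕ) (F : Fin m → Fin m → M) :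
    ∑ a, ∑ b, F a b
      = (∑ q : {p : Fin m × Fin m // p.1 < p.2}, (F q.1.1 q.1.2 + F q.1.2 q.1.1))
        + ∑ a, F a a := by
  classical
  have h0 : (∑ z : Fin m × Fin m, F z.1 z.2) = ∑ a, ∑ b, F a b :=
    Fintype.sum_prod_type _
  have h0 := h0.symm
  have hsub : ∀ (G : Fin m × Fin m → M), ∑ q : {p : Fin m × Fin m // p.1 < p.2}, G q.1
      = ∑ z ∈ Finset.univ.filter (fun z : Fin m × Fin m => z.1 < z.2), G z := by
    intro G
    rw [← Finset.sum_subtype_eq_sum_filter, Finset.subtype_univ]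
  have hswap : ∑ z ∈ Finset.univ.filter (fun z : Fin m × Fin m => z.2 < z.1), F z.1 z.2
      = ∑ z ∈ Finset.univ.filter (fun z : Fin m × Fin m => z.1 < z.2), F z.2 z.1 := by
    refine Finset.sum_nbij' (fun z => Prod.swap z) (fun z => Prod.swap z) ?_ ?_ ?_ ?_ ?_ <;>
      simp
  have hdiag : ∑ z ∈ Finset.univ.filter (fun z : Fin m × Fin m => ¬ z.1 < z.2 ∧ ¬ z.2 < z.1),
        F z.1 z.2 = ∑ a, F a a := by
    refine Finset.sum_nbij' (fun z => z.1) (fun a => (a, a)) ?_ ?_ ?_ ?_ ?_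
    · intro z hz; simp
    · intro a _; simp
    · intro z hz
      simp only [Finset.mem_filter, Finset.mem_univ, true_and] at hz
      have h12 : z.1 = z.2 := le_antisymm (not_lt.mp hz.2) (not_lt.mp hz.1)
      exact Prod.ext (by rfl) (by simpa using h12)
    · intro a _; rfl
    · intro z hz
      simp only [Finset.mem_filter, Finset.mem_univ, true_and] at hz
      have h12 : z.1 = z.2 := le_antisymm (not_lt.mp hz.2) (not_lt.mp hz.1)
      rw [← h12]
  have key : ∑ z : Fin m × Fin m, F z.1 z.2
      = ∑ z ∈ Finset.univ.filter (fun z : Fin m × Fin m => z.1 < z.2), F z.1 z.2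
        + (∑ z ∈ Finset.univ.filter (fun z : Fin m × Fin m => z.2 < z.1), F z.1 z.2
          + ∑ z ∈ Finset.univ.filter (fun z : Fin m × Fin m => ¬ z.1 < z.2 ∧ ¬ z.2 < z.1),
              F z.1 z.2) := by
    rw [← Finset.sum_filter_add_sum_filter_not Finset.univ
      (fun z : Fin m × Fin m => z.1 < z.2) (fun z => F z.1 z.2)]
    congr 1
    rw [← Finset.sum_filter_add_sum_filter_not
      (Finset.univ.filter (fun z : Fin m × Fin m => ¬ z.1 < z.2))
      (fun z : Fin m × Fin m => z.2 < z.1) (fun z => F z.1 z.2)]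
    congr 1
    · rw [Finset.filter_filter]
      apply Finset.sum_congr _ (fun _ _ => rfl)
      apply Finset.filter_congr
      intro z _
      constructor
      · rintro ⟨_, h⟩; exact h
      · intro h; exact ⟨not_lt.mpr h.le, h⟩
    · rw [Finset.filter_filter]
  rw [h0, key, hswap, hdiag, ← add_assoc, ← Finset.sum_add_distrib,
    ← hsub (fun z => F z.1 z.2 + F z.2 z.1)]

lemma sum_collapse {α β M : Type*} [Fintype α] [Fintype β] [DecidableEq α]
    [AddCommMonoid M] (m : α) (f : α → β → M) :
    (∑ z : α × β, if z.1 = m then f z.1 z.2 else 0) = ∑ b : β, f m b := by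
  rw [Fintype.sum_prod_type, Finset.sum_comm]
  refine Finset.sum_congr rfl fun b _ => ?_
  rw [Finset.sum_ite_eq' Finset.univ m (fun a => f a b)]
  simp

end Sums

section Deg3Def

/-- Index type for the degree-3 linear system. -/
abbrev I3 (n : ℕ) := ((Fin (n+1)) × SP n) ⊕ ((Fin (n+1)) × (Fin (n+1)))

/-- Coefficient matrix of the degree-3 linear system. -/
noncomputable def Hmat (n : ℕ) : I3 n → I3 n → MvPolynomial (Var n) ℂ
  | Sum.inl (m, p), Sum.inl (m', q) => if m' = m then GA n p q else 0
  | Sum.inl (m, p), Sum.inr (m', c') => if m' = m then sA n p c' else 0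
  | Sum.inr (m, c0), col =>
      if h : m < c0 then
        (if col = Sum.inr (m, c0) then 1 else 0)
          - (if col = Sum.inl (c0, ⟨(m, c0), h⟩) then 1 else 0)
      else if h' : c0 < m then
        (if col = Sum.inr (m, c0) then 1 else 0)
          - (if col = Sum.inl (c0, ⟨(c0, m), h'⟩) then 1 else 0)
      else
        (match col with
          | Sum.inr (m', _) => if m' = m then (1 : MvPolynomial (Var n) ℂ) else 0
          | Sum.inl _ => 0)

end Deg3Def



section Det

/-- The evaluation point: `x_ii ↦ i`, all other variables `0`. -/
noncomputable def pt (n : ℕ) : Var n → ℂ := fun v =>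
  match v with
  | Sum.inl p => if p.1.1 = p.1.2 then ((p.1.1 : ℕ) : ℂ) else 0
  | _ => 0

lemma pt_x (a b : Fin (n+1)) : MvPolynomial.eval (pt n) (MvPolynomial.X (xIdx a b))
    = if a = b then ((a : ℕ) : ℂ) else 0 := by
  rw [MvPolynomial.eval_X]
  by_cases h : a ≤ b
  · rw [show (xIdx a b : Var n) = Sum.inl ⟨(a, b), h⟩ from dif_pos h]
    rfl
  · rw [show (xIdx a b : Var n) = Sum.inl ⟨(b, a), (not_le.mp h).le⟩ from dif_neg h]
    next =>
      have hab : a ≠ b := fun hh => h (le_of_eq hh)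
      show (if b = a then ((b : ℕ) : ℂ) else 0) = _
      rw [if_neg (Ne.symm hab), if_neg hab]

noncomputable def Gmat (n : ℕ) : Matrix (SP n) (SP n) (MvPolynomial (Var n) ℂ) :=
  fun p q => GA n p q

lemma evalGA (p q : SP n) : MvPolynomial.eval (pt n) (GA n p q)
    = if q = p then 2 * (((p.1.2 : ℕ) : ℂ) - ((p.1.1 : ℕ) : ℂ)) else 0 := by
  obtain ⟨⟨i, j⟩, hij⟩ := p
  obtain ⟨⟨a, b⟩, hab⟩ := q
  have hij' : (i : ℕ) < (j : ℕ) := hij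
  have hab' : (a : ℕ) < (b : ℕ) := hab
  simp only [GA, SA, Subtype.mk.injEq, Prod.mk.injEq]
  simp only [map_add, map_sub, apply_ite (MvPolynomial.eval (pt n)), map_zero, pt_x]
  split_ifs <;> (try (obtain ⟨rfl, rfl⟩ := ‹_ ∧ _›)) <;> subst_vars
  all_goals try ring
  all_goals exfalso
  all_goals try omega

lemma evalG_diag (n : ℕ) : (Gmat n).map (MvPolynomial.eval (pt n))
    = Matrix.diagonal (fun q : SP n => 2 * (((q.1.2 : ℕ) : ℂ) - ((q.1.1 : ℕ) : ℂ))) := by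
  ext p q
  rw [Matrix.map_apply, Gmat, evalGA, Matrix.diagonal_apply]
  by_cases h : q = p
  · subst h; simp
  · rw [if_neg h, if_neg (fun hh => h hh.symm)]

lemma detG_ne (n : ℕ) : MvPolynomial.eval (pt n) ((Gmat n).det) ≠ 0 := by
  rw [RingHom.map_det, RingHom.mapMatrix_apply, evalG_diag, Matrix.det_diagonal]
  refine Finset.prod_ne_zero_iff.mpr fun q _ => ?_
  have h1 : (q.1.1 : ℕ) < (q.1.2 : ℕ) := q.2
  have h2 : ((q.1.1 : ℕ) : ℂ) ≠ ((q.1.2 : ℕ) : ℂ) := by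
    exact_mod_cast Nat.ne_of_lt h1
  exact mul_ne_zero two_ne_zero (sub_ne_zero_of_ne (Ne.symm h2))

lemma GmatK_isUnit [IsFractionRing (MvPolynomial (Var n) ℂ) K] :
    IsUnit ((Gmat n).map (algebraMap (MvPolynomial (Var n) ℂ) K)).det := by
  rw [isUnit_iff_ne_zero]
  have h1 : ((Gmat n).map (algebraMap (MvPolynomial (Var n) ℂ) K)).det
      = algebraMap (MvPolynomial (Var n) ℂ) K ((Gmat n).det) := by
    rw [RingHom.map_det, RingHom.mapMatrix_apply]
  rw [h1]
  intro h
  have h2 : (Gmat n).det = 0 := IsFractionRing.injective (MvPolynomial (Var n) ℂ) K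
    (by rw [map_zero]; exact h)
  exact detG_ne n (by rw [h2, map_zero])

end Det


section Deg3Det

lemma eval_sA (p : SP n) (c : Fin (n+1)) : MvPolynomial.eval (pt n) (sA n p c) = 0 := by
  obtain ⟨⟨i, j⟩, hij⟩ := p
  have hij' : (i : ℕ) < (j : ℕ) := hij
  simp only [sA, SA, map_add, map_sub, apply_ite (MvPolynomial.eval (pt n)), map_zero, pt_x]
  split_ifs <;> subst_vars
  all_goals try ring
  all_goals exfalso
  all_goals omega

/-- Block function for the degree-3 matrix. -/
def bH (n : ℕ) : I3 n → ℕ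
  | Sum.inl _ => 0
  | Sum.inr (m, c) => if m = c then 2 else 1

/-- Diagonal values of the degree-3 matrix at the evaluation point. -/
noncomputable def dgH (n : ℕ) : I3 n → ℂ
  | Sum.inl (_, p) => 2 * (((p.1.2 : ℕ) : ℂ) - ((p.1.1 : ℕ) : ℂ))
  | Sum.inr _ => 1

lemma dgH_ne (x : I3 n) : dgH n x ≠ 0 := by
  rcases x with ⟨m, p⟩ | z
  · show 2 * (((p.1.2 : ℕ) : ℂ) - ((p.1.1 : ℕ) : ℂ)) ≠ 0
    have h1 : (p.1.1 : ℕ) < (p.1.2 : ℕ) := p.2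
    have h2 : ((p.1.1 : ℕ) : ℂ) ≠ ((p.1.2 : ℕ) : ℂ) := by exact_mod_cast Nat.ne_of_lt h1
    exact mul_ne_zero two_ne_zero (sub_ne_zero_of_ne (Ne.symm h2))
  · exact one_ne_zero

lemma Hmat_mixed_inr {m c0 : Fin (n+1)} (h : m ≠ c0) (z : Fin (n+1) × Fin (n+1)) :
    Hmat n (Sum.inr (m, c0)) (Sum.inr z) = if z = (m, c0) then 1 else 0 := by
  rcases lt_or_gt_of_ne h with h' | h'
  · show (if hh : m < c0 then _ else _) = _
    rw [dif_pos h',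
      if_neg (show ¬ (Sum.inr z : I3 n) = Sum.inl (c0, ⟨(m, c0), h'⟩) from
        fun hh => by cases hh), sub_zero]
    simp only [Sum.inr.injEq]
  · show (if hh : m < c0 then _ else _) = _
    rw [dif_neg (not_lt.mpr h'.le), dif_pos h',
      if_neg (show ¬ (Sum.inr z : I3 n) = Sum.inl (c0, ⟨(c0, m), h'⟩) from
        fun hh => by cases hh), sub_zero]
    simp only [Sum.inr.injEq]

lemma Hmat_diag_inr (m : Fin (n+1)) (col : I3 n) :
    Hmat n (Sum.inr (m, m)) col
      = (match col with
          | Sum.inr (m', _) => if m' = m then (1 : MvPolynomial (Var n) ℂ) else 0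
          | Sum.inl _ => 0) := by
  show (if hh : m < m then _ else _) = _
  rw [dif_neg (lt_irrefl m), dif_neg (lt_irrefl m)]

lemma detH_ne (n : ℕ) : MvPolynomial.eval (pt n) (Matrix.det (Matrix.of (Hmat n))) ≠ 0 := by
  classical
  rw [RingHom.map_det, RingHom.mapMatrix_apply]
  set M : Matrix (I3 n) (I3 n) ℂ := (Matrix.of (Hmat n)).map (MvPolynomial.eval (pt n)) with hMdef
  have hentry : ∀ r c, M r c = MvPolynomial.eval (pt n) (Hmat n r c) := fun r c => rfl
  rw [← Matrix.det_transpose]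
  have hBT : (M.transpose).BlockTriangular (bH n) := by
    intro i j hlt
    show M j i = 0
    rcases j with ⟨m, p⟩ | ⟨m, c⟩
    · rcases i with ⟨m', q⟩ | ⟨m', c'⟩
      · exfalso
        exact absurd hlt (by show ¬ (0 : ℕ) < 0; omega)
      · rw [hentry]
        show MvPolynomial.eval (pt n) (if m' = m then sA n p c' else 0) = 0
        split_ifs
        · exact eval_sA _ _
        · exact map_zero _
    · by_cases hmc : m = c
      · exfalso
        subst hmc
        have h2 : bH n (Sum.inr (m, m)) = 2 := by show (if m = m then 2 else 1) = 2; simp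
        have h3 : bH n i ≤ 2 := by
          rcases i with _ | ⟨a, b⟩
          · show (0 : ℕ) ≤ 2; omega
          · show (if a = b then 2 else 1) ≤ 2; split_ifs <;> omega
        rw [h2] at hlt; omega
      · rcases i with ⟨m', q⟩ | ⟨m', c'⟩
        · exfalso
          have h2 : bH n (Sum.inr (m, c)) = 1 := by
            show (if m = c then 2 else 1) = 1; rw [if_neg hmc]
          have h3 : bH n (Sum.inl (m', q)) = 0 := rfl
          rw [h2, h3] at hlt; omega
        · have h4 : m' = c' := by
            by_contra hne
            have h2 : bH n (Sum.inr (m, c)) = 1 := by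
              show (if m = c then 2 else 1) = 1; rw [if_neg hmc]
            have h3 : bH n (Sum.inr (m', c')) = 1 := by
              show (if m' = c' then 2 else 1) = 1; rw [if_neg hne]
            rw [h2, h3] at hlt; omega
          subst h4
          rw [hentry, Hmat_mixed_inr hmc]
          rw [if_neg (by
            intro hh
            have := (Prod.mk.injEq _ _ _ _).mp hh
            exact hmc (this.1.symm ▸ this.2.symm ▸ rfl))]
          exact map_zero _
  rw [Matrix.BlockTriangular.det hBT]
  refine Finset.prod_ne_zero_iff.mpr fun k hk => ?_
  obtain ⟨x, _, rfl⟩ := Finset.mem_image.mp hk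
  rcases x with ⟨m0, p0⟩ | ⟨m0, c0⟩
  · -- block 0 is diagonal
    have hb : bH n (Sum.inl (m0, p0)) = 0 := rfl
    rw [hb]
    have hblock : (M.transpose).toSquareBlock (bH n) 0
        = Matrix.diagonal (fun s : {a : I3 n // bH n a = 0} => dgH n s.val) := by
      ext ⟨x, hx⟩ ⟨y, hy⟩
      rcases x with ⟨m, p⟩ | ⟨a, b⟩
      swap
      · exfalso
        have : (if a = b then 2 else 1) = 0 := hx
        split_ifs at this <;> omega
      rcases y with ⟨m', q⟩ | ⟨a, b⟩
      swap
      · exfalso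
        have : (if a = b then 2 else 1) = 0 := hy
        split_ifs at this <;> omega
      show M (Sum.inl (m', q)) (Sum.inl (m, p)) = _
      rw [hentry]
      show MvPolynomial.eval (pt n) (if m = m' then GA n q p else 0) = _
      rw [apply_ite (MvPolynomial.eval (pt n)), map_zero, evalGA]
      rw [Matrix.diagonal_apply]
      by_cases hm : m = m'
      · by_cases hpq : p = q
        · subst hm; subst hpq
          simp [dgH]
        · rw [if_pos hm, if_neg hpq, if_neg (by
            intro hh
            apply hpq
            have := Subtype.mk.injEq .. ▸ hh
            have h5 : (Sum.inl (m, p) : I3 n) = Sum.inl (m', q) := congrArg Subtype.val hh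
            injection h5 with h6
            exact ((Prod.mk.injEq _ _ _ _).mp h6).2)]
      · rw [if_neg hm, if_neg (by
          intro hh
          apply hm
          have h5 : (Sum.inl (m, p) : I3 n) = Sum.inl (m', q) := congrArg Subtype.val hh
          injection h5 with h6
          exact ((Prod.mk.injEq _ _ _ _).mp h6).1)]
    rw [hblock, Matrix.det_diagonal]
    exact Finset.prod_ne_zero_iff.mpr fun s _ => dgH_ne s.val
  · by_cases hmc : m0 = c0
    · -- block 2 is the identity
      subst hmc
      have hb : bH n (Sum.inr (m0, m0)) = 2 := by show (if m0 = m0 then 2 else 1) = 2; simp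
      rw [hb]
      have hblock : (M.transpose).toSquareBlock (bH n) 2
          = (1 : Matrix {a : I3 n // bH n a = 2} {a : I3 n // bH n a = 2} ℂ) := by
        ext ⟨x, hx⟩ ⟨y, hy⟩
        rcases x with ⟨m, p⟩ | ⟨a, b⟩
        · exact absurd hx (by intro hh; exact absurd hh (by show ¬ (0:ℕ) = 2; omega))
        have hab : a = b := by
          by_contra hne
          have : (if a = b then 2 else 1) = 2 := hx
          rw [if_neg hne] at this; omega
        subst hab
        rcases y with ⟨m, p⟩ | ⟨a', b'⟩
        · exact absurd hy (by intro hh; exact absurd hh (by show ¬ (0:ℕ) = 2; omega))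
        have hab' : a' = b' := by
          by_contra hne
          have : (if a' = b' then 2 else 1) = 2 := hy
          rw [if_neg hne] at this; omega
        subst hab'
        show M (Sum.inr (a', a')) (Sum.inr (a, a)) = _
        rw [hentry, Hmat_diag_inr]
        show MvPolynomial.eval (pt n) (if a = a' then 1 else 0) = _
        rw [Matrix.one_apply]
        by_cases h : a = a'
        · subst h; simp
        · rw [if_neg h, if_neg (by
            intro hh
            apply h
            have h5 : (Sum.inr (a, a) : I3 n) = Sum.inr (a', a') := congrArg Subtype.val hh
            injection h5 with h6
            exact ((Prod.mk.injEq _ _ _ _).mp h6).1), map_zero]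
      rw [hblock, Matrix.det_one]
      exact one_ne_zero
    · -- block 1 is the identity
      have hb : bH n (Sum.inr (m0, c0)) = 1 := by
        show (if m0 = c0 then 2 else 1) = 1; rw [if_neg hmc]
      rw [hb]
      have hblock : (M.transpose).toSquareBlock (bH n) 1
          = (1 : Matrix {a : I3 n // bH n a = 1} {a : I3 n // bH n a = 1} ℂ) := by
        ext ⟨x, hx⟩ ⟨y, hy⟩
        rcases x with ⟨m, p⟩ | ⟨a, b⟩
        · exact absurd hx (by intro hh; exact absurd hh (by show ¬ (0:ℕ) = 1; omega))
        have hab : a ≠ b := by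
          intro hne
          have : (if a = b then 2 else 1) = 1 := hx
          rw [if_pos hne] at this; omega
        rcases y with ⟨m, p⟩ | ⟨a', b'⟩
        · exact absurd hy (by intro hh; exact absurd hh (by show ¬ (0:ℕ) = 1; omega))
        have hab' : a' ≠ b' := by
          intro hne
          have : (if a' = b' then 2 else 1) = 1 := hy
          rw [if_pos hne] at this; omega
        show M (Sum.inr (a', b')) (Sum.inr (a, b)) = _
        rw [hentry, Hmat_mixed_inr hab']
        rw [apply_ite (MvPolynomial.eval (pt n)), map_one, map_zero, Matrix.one_apply]
        by_cases h : (a, b) = (a', b')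
        · rw [if_pos h, if_pos (by
            apply Subtype.ext
            show (Sum.inr (a, b) : I3 n) = Sum.inr (a', b')
            rw [h])]
        · rw [if_neg h, if_neg (by
            intro hh
            exact h (Sum.inr.inj (congrArg Subtype.val hh)))]
      rw [hblock, Matrix.det_one]
      exact one_ne_zero

lemma HmatK_isUnit [IsFractionRing (MvPolynomial (Var n) ℂ) K] :
    IsUnit ((Matrix.of (Hmat n)).map (algebraMap (MvPolynomial (Var n) ℂ) K)).det := by
  rw [isUnit_iff_ne_zero]
  have h1 : ((Matrix.of (Hmat n)).map (algebraMap (MvPolynomial (Var n) ℂ) K)).det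
      = algebraMap (MvPolynomial (Var n) ℂ) K ((Matrix.of (Hmat n)).det) := by
    rw [RingHom.map_det, RingHom.mapMatrix_apply]
  rw [h1]
  intro h
  have h2 : (Matrix.of (Hmat n)).det = 0 := IsFractionRing.injective (MvPolynomial (Var n) ℂ) K
    (by rw [map_zero]; exact h)
  exact detH_ne n (by rw [h2, map_zero])

end Deg3Det

section Aux

variable [Algebra ℂ K]

/-- Bundle of all the structure used in the proof. -/
structure Ctx (n : ℕ) (K R : Type) [Field K] [Algebra (MvPolynomial (Var n) ℂ) K]
    [Algebra ℂ K] [Ring R] where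
  D : Var n → Derivation ℂ K K
  hD : ∀ v w : Var n, D v (algebraMap (MvPolynomial (Var n) ℂ) K (MvPolynomial.X w))
      = if v = w then 1 else 0
  σ : K →+* R
  δ : Var n → R
  hcomm : ∀ v w, δ v * δ w = δ w * δ v
  hrel : ∀ (v : Var n) (a : K), δ v * σ a = σ a * δ v + σ (D v a)
  I : Submodule R R
  hA : ∀ p, Aop σ δ p ∈ I
  hB : Bop σ δ ∈ I
  hC : ∀ i j : Fin (n+1), i < j → Cop σ δ i j ∈ I
  hE : Eop σ δ ∈ I

namespace Ctx

variable (C : Ctx n K R)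

/-- Normal forms. -/
noncomputable def NF (c0 : K) (c1 : Fin (n+1) → K) (c2 : Fin n → K) : R :=
  C.σ c0 + (∑ i, C.σ (c1 i) * C.δ (yIdx i))
    + ∑ i : Fin n, C.σ (c2 i) * (C.δ (yIdx i.castSucc) * C.δ (yIdx i.castSucc))

def Good (f : R) : Prop := ∃ (c0 : K) (c1 : Fin (n+1) → K) (c2 : Fin n → K),
  f - C.NF c0 c1 c2 ∈ C.I

lemma mul_mem_I {f : R} (h : f ∈ C.I) (g : R) : g * f ∈ C.I := by
  simpa [smul_eq_mul] using C.I.smul_mem g h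

lemma NF_zero : C.NF 0 (fun _ => 0) (fun _ => 0) = 0 := by
  simp [NF]

lemma good_of_mem {f : R} (h : f ∈ C.I) : C.Good f :=
  ⟨0, fun _ => 0, fun _ => 0, by simpa [C.NF_zero] using h⟩

lemma good_zero : C.Good 0 := C.good_of_mem C.I.zero_mem

lemma good_add {f g : R} (hf : C.Good f) (hg : C.Good g) : C.Good (f + g) := by
  obtain ⟨a0, a1, a2, ha⟩ := hf
  obtain ⟨b0, b1, b2, hb⟩ := hg
  refine ⟨a0 + b0, fun i => a1 i + b1 i, fun i => a2 i + b2 i, ?_⟩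
  have : f + g - C.NF (a0+b0) (fun i => a1 i + b1 i) (fun i => a2 i + b2 i)
      = (f - C.NF a0 a1 a2) + (g - C.NF b0 b1 b2) := by
    simp only [NF, map_add, add_mul, Finset.sum_add_distrib]
    abel
  rw [this]; exact C.I.add_mem ha hb

lemma good_smul (a : K) {f : R} (hf : C.Good f) : C.Good (C.σ a * f) := by
  obtain ⟨a0, a1, a2, ha⟩ := hf
  refine ⟨a * a0, fun i => a * a1 i, fun i => a * a2 i, ?_⟩
  have : C.σ a * f - C.NF (a*a0) (fun i => a * a1 i) (fun i => a * a2 i)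
      = C.σ a * (f - C.NF a0 a1 a2) := by
    simp only [NF, map_mul, mul_sub, mul_add, Finset.mul_sum, mul_assoc]
  rw [this]; exact C.mul_mem_I ha _

lemma good_neg {f : R} (hf : C.Good f) : C.Good (-f) := by
  have := C.good_smul (-1) hf
  simpa using this

lemma good_sub {f g : R} (hf : C.Good f) (hg : C.Good g) : C.Good (f - g) := by
  simpa [sub_eq_add_neg] using C.good_add hf (C.good_neg hg)

lemma good_congr {f g : R} (h : f - g ∈ C.I) (hg : C.Good g) : C.Good f := by
  obtain ⟨a0, a1, a2, ha⟩ := hg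
  exact ⟨a0, a1, a2, by simpa [sub_eq_add_neg, add_assoc] using C.I.add_mem h ha⟩

lemma good_sum {ι : Type*} (s : Finset ι) (f : ι → R) (h : ∀ i ∈ s, C.Good (f i)) :
    C.Good (∑ i ∈ s, f i) := by
  classical
  induction s using Finset.cons_induction with
  | empty => simpa using C.good_zero
  | cons a s ha ih =>
      rw [Finset.sum_cons]
      exact C.good_add (h a (Finset.mem_cons_self a s))
        (ih fun i hi => h i (Finset.mem_cons_of_mem hi))

lemma good_const (a : K) : C.Good (C.σ a) :=
  ⟨a, fun _ => 0, fun _ => 0, by simp [NF]⟩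

lemma good_one : C.Good 1 := by simpa using C.good_const 1

lemma good_lin (a : K) (i : Fin (n+1)) : C.Good (C.σ a * C.δ (yIdx i)) := by
  classical
  refine ⟨0, fun k => if k = i then a else 0, fun _ => 0, ?_⟩
  have : (∑ k, C.σ (if k = i then a else 0) * C.δ (yIdx k)) = C.σ a * C.δ (yIdx i) := by
    rw [Finset.sum_eq_single i] <;> simp +contextual
  simp [NF, this]

lemma good_dy (i : Fin (n+1)) : C.Good (C.δ (yIdx i)) := by
  simpa using C.good_lin 1 i

lemma good_sq' (a : K) (i : Fin n) :
    C.Good (C.σ a * (C.δ (yIdx i.castSucc) * C.δ (yIdx i.castSucc))) := by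
  classical
  refine ⟨0, fun _ => 0, fun k => if k = i then a else 0, ?_⟩
  have : (∑ k : Fin n, C.σ (if k = i then a else 0) *
      (C.δ (yIdx k.castSucc) * C.δ (yIdx k.castSucc)))
      = C.σ a * (C.δ (yIdx i.castSucc) * C.δ (yIdx i.castSucc)) := by
    rw [Finset.sum_eq_single i] <;> simp +contextual
  simp [NF, this]

lemma good_unsmul {a : K} (ha : a ≠ 0) {f : R} (h : C.Good (C.σ a * f)) : C.Good f := by
  have := C.good_smul a⁻¹ h
  rwa [← mul_assoc, ← map_mul, inv_mul_cancel₀ ha, map_one, one_mul] at this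


variable [IsFractionRing (MvPolynomial (Var n) ℂ) K]

lemma D_x (m i j : Fin (n+1)) : C.D (yIdx m) (xK i j : K) = 0 := by
  rw [xK, C.hD, if_neg (xIdx_ne_yIdx i j m)]

lemma D_y (m i : Fin (n+1)) : C.D (yIdx m) (yK i : K) = if m = i then 1 else 0 := by
  rw [yK, C.hD]
  by_cases h : m = i
  · subst h; simp
  · rw [if_neg (fun hh => h (yIdx_inj.mp hh)), if_neg h]

lemma D_r (m : Fin (n+1)) : C.D (yIdx m) (rK n K) = 0 := by
  rw [rK, C.hD, if_neg (rIdx_ne_yIdx m)]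

lemma D_r2 (m : Fin (n+1)) : C.D (yIdx m) (rK n K * rK n K) = 0 := by
  rw [Derivation.leibniz, C.D_r, smul_zero]; exact add_zero 0

lemma D_inv {v : Var n} {a : K} (h0 : a ≠ 0) (h : C.D v a = 0) : C.D v a⁻¹ = 0 := by
  have h1 : C.D v (a * a⁻¹) = 0 := by
    rw [mul_inv_cancel₀ h0]; simpa using (C.D v).map_one_eq_zero
  rw [Derivation.leibniz, h, smul_zero, add_zero, smul_eq_mul] at h1
  exact (mul_eq_zero.mp h1).resolve_left h0

lemma D_SK (m : Fin (n+1)) (p : SP n) (a b : Fin (n+1)) : C.D (yIdx m) (SK p a b : K) = 0 := by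
  rw [SK_eq]
  split_ifs <;> simp [C.D_x, map_sub, map_add, map_zero]

lemma rK_ne : (rK n K) ≠ 0 := by
  intro h
  have h2 : algebraMap (MvPolynomial (Var n) ℂ) K (MvPolynomial.X rIdx)
      = algebraMap (MvPolynomial (Var n) ℂ) K 0 := by
    rw [map_zero]; simpa [rK] using h
  exact MvPolynomial.X_ne_zero _ (IsFractionRing.injective (MvPolynomial (Var n) ℂ) K h2)

lemma comm_sigma {v : Var n} {a : K} (h : C.D v a = 0) :
    C.δ v * C.σ a = C.σ a * C.δ v := by
  rw [C.hrel, h, map_zero, add_zero]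

lemma push (v : Var n) (a : K) (h : R) :
    C.δ v * (C.σ a * h) = C.σ a * (C.δ v * h) + C.σ (C.D v a) * h := by
  rw [← mul_assoc, C.hrel, add_mul, mul_assoc]

lemma good_sq_all (a : K) (c : Fin (n+1)) :
    C.Good (C.σ a * (C.δ (yIdx c) * C.δ (yIdx c))) := by
  rcases Fin.eq_castSucc_or_eq_last c with ⟨i, rfl⟩ | rfl
  · exact C.good_sq' a i
  · refine C.good_smul a ?_
    have hsum : (∑ i : Fin (n+1), C.δ (yIdx i) * C.δ (yIdx i))
        = (∑ i : Fin n, C.δ (yIdx i.castSucc) * C.δ (yIdx i.castSucc))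
          + C.δ (yIdx (Fin.last n)) * C.δ (yIdx (Fin.last n)) := Fin.sum_univ_castSucc _
    have hmem : C.δ (yIdx (Fin.last n)) * C.δ (yIdx (Fin.last n))
        - (C.σ (rK n K * rK n K)
            - ∑ i : Fin n, C.δ (yIdx i.castSucc) * C.δ (yIdx i.castSucc)) ∈ C.I := by
      have heq : C.δ (yIdx (Fin.last n)) * C.δ (yIdx (Fin.last n))
          - (C.σ (rK n K * rK n K)
            - ∑ i : Fin n, C.δ (yIdx i.castSucc) * C.δ (yIdx i.castSucc))
          = Bop C.σ C.δ := by
        rw [Bop, hsum]; abel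
      rw [heq]; exact C.hB
    refine C.good_congr hmem (C.good_sub (C.good_const _) (C.good_sum _ _ fun i _ => ?_))
    simpa using C.good_sq' 1 i

lemma copExpand (p : SP n) :
    Cop C.σ C.δ p.1.1 p.1.2
      = (∑ a, ∑ b, C.σ (SK p a b) * (C.δ (yIdx a) * C.δ (yIdx b)))
        + (C.σ (yK p.1.2) * C.δ (yIdx p.1.1) - C.σ (yK p.1.1) * C.δ (yIdx p.1.2)) := by
  obtain ⟨⟨i, j⟩, hij⟩ := p
  dsimp only
  have hne : i ≠ j := ne_of_lt hij
  have inner : ∀ a : Fin (n+1),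
      (∑ b, C.σ (SK ⟨(i,j),hij⟩ a b) * (C.δ (yIdx a) * C.δ (yIdx b)))
      = C.σ (xK a j) * (C.δ (yIdx a) * C.δ (yIdx i))
        - C.σ (xK a i) * (C.δ (yIdx a) * C.δ (yIdx j))
        + (if a = i then C.σ (xK j j - xK i i) * (C.δ (yIdx a) * C.δ (yIdx j)) else 0) := by
    intro a
    have hb : ∀ b, C.σ (SK ⟨(i,j),hij⟩ a b) * (C.δ (yIdx a) * C.δ (yIdx b))
        = (if b = i then C.σ (xK a j) * (C.δ (yIdx a) * C.δ (yIdx b)) else 0)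
          - (if b = j then C.σ (xK a i) * (C.δ (yIdx a) * C.δ (yIdx b)) else 0)
          + (if a = i then (if b = j then
              C.σ (xK j j - xK i i) * (C.δ (yIdx a) * C.δ (yIdx b)) else 0) else 0) := by
      intro b
      rw [SK_eq]
      simp only [map_sub, map_add, apply_ite C.σ, map_zero, add_mul, sub_mul, ite_mul, zero_mul]
    rw [Finset.sum_congr rfl (fun b _ => hb b), Finset.sum_add_distrib, Finset.sum_sub_distrib,
      Finset.sum_ite_eq' Finset.univ i, Finset.sum_ite_eq' Finset.univ j]
    have h3 : (∑ b, (if a = i then (if b = j then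
          C.σ (xK j j - xK i i) * (C.δ (yIdx a) * C.δ (yIdx b)) else 0) else 0))
        = (if a = i then C.σ (xK j j - xK i i) * (C.δ (yIdx a) * C.δ (yIdx j)) else 0) := by
      by_cases ha : a = i
      · simp only [ha, if_true]
        rw [Finset.sum_ite_eq' Finset.univ j]
        simp
      · simp [ha]
    rw [h3]
    simp
  have houter : (∑ a, ∑ b, C.σ (SK ⟨(i,j),hij⟩ a b) * (C.δ (yIdx a) * C.δ (yIdx b)))
      = ((∑ a, C.σ (xK a j) * (C.δ (yIdx a) * C.δ (yIdx i)))
        - (∑ a, C.σ (xK a i) * (C.δ (yIdx a) * C.δ (yIdx j))))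
        + C.σ (xK j j - xK i i) * (C.δ (yIdx i) * C.δ (yIdx j)) := by
    rw [Finset.sum_congr rfl (fun a _ => inner a), Finset.sum_add_distrib,
      Finset.sum_sub_distrib, Finset.sum_ite_eq' Finset.univ i]
    simp
  have hsplit : ∀ G : Fin (n+1) → R,
      (∑ a, G a) = (∑ a ∈ Finset.univ \ {i, j}, G a) + (G i + G j) := by
    intro G
    rw [← Finset.sum_pair hne, Finset.sum_sdiff (Finset.subset_univ _)]
  rw [houter, hsplit (fun a => C.σ (xK a j) * (C.δ (yIdx a) * C.δ (yIdx i))),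
    hsplit (fun a => C.σ (xK a i) * (C.δ (yIdx a) * C.δ (yIdx j)))]
  rw [Cop]
  have hsum1 : (∑ a ∈ Finset.univ \ ({i, j} : Finset (Fin (n+1))),
      C.σ (xK a j) * (C.δ (yIdx a) * C.δ (yIdx i)))
      = ∑ k ∈ Finset.univ \ ({i, j} : Finset (Fin (n+1))),
        C.σ (xK j k) * (C.δ (yIdx i) * C.δ (yIdx k)) := by
    refine Finset.sum_congr rfl (fun k _ => ?_)
    rw [xK_symm, C.hcomm]
  have hsum2 : (∑ a ∈ Finset.univ \ ({i, j} : Finset (Fin (n+1))),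
      C.σ (xK a i) * (C.δ (yIdx a) * C.δ (yIdx j)))
      = ∑ k ∈ Finset.univ \ ({i, j} : Finset (Fin (n+1))),
        C.σ (xK i k) * (C.δ (yIdx j) * C.δ (yIdx k)) := by
    refine Finset.sum_congr rfl (fun k _ => ?_)
    rw [xK_symm, C.hcomm]
  rw [Finset.sum_sub_distrib, ← hsum1, ← hsum2]
  have hij2 : C.σ (2 * (xK j j - xK i i)) * (C.δ (yIdx i) * C.δ (yIdx j))
      = C.σ (xK j j - xK i i) * (C.δ (yIdx i) * C.δ (yIdx j))
        + (C.σ (xK j j) * (C.δ (yIdx j) * C.δ (yIdx i))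
          - C.σ (xK i i) * (C.δ (yIdx i) * C.δ (yIdx j))) := by
    rw [two_mul, map_add, add_mul, map_sub, sub_mul, C.hcomm (yIdx j) (yIdx i)]
  rw [hij2, xK_symm j i, C.hcomm (yIdx j) (yIdx i)]
  abel

lemma eq2 (p : SP n) :
    C.Good (∑ q : SP n, C.σ (algebraMap (MvPolynomial (Var n) ℂ) K (GA n p q))
      * (C.δ (yIdx q.1.1) * C.δ (yIdx q.1.2))) := by
  have hGA : ∀ q : SP n, C.σ (algebraMap (MvPolynomial (Var n) ℂ) K (GA n p q))
      * (C.δ (yIdx q.1.1) * C.δ (yIdx q.1.2))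
      = C.σ (SK p q.1.1 q.1.2) * (C.δ (yIdx q.1.1) * C.δ (yIdx q.1.2))
        + C.σ (SK p q.1.2 q.1.1) * (C.δ (yIdx q.1.2) * C.δ (yIdx q.1.1)) := by
    intro q
    rw [GA, map_add, map_add, add_mul, SK, SK, C.hcomm (yIdx q.1.2) (yIdx q.1.1)]
  rw [Finset.sum_congr rfl fun q _ => hGA q]
  have hss := sum_split (n+1) (fun a b => C.σ (SK p a b) * (C.δ (yIdx a) * C.δ (yIdx b)))
  have e1 := eq_sub_of_add_eq hss.symm
  have e2 := eq_sub_of_add_eq (C.copExpand p).symm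
  rw [e1, e2]
  exact C.good_sub (C.good_sub (C.good_of_mem (C.hC _ _ p.2))
      (C.good_sub (C.good_lin _ _) (C.good_lin _ _)))
    (C.good_sum _ _ fun a _ => C.good_sq_all _ a)

lemma good_solve {ι : Type} [Fintype ι] [DecidableEq ι] (M : Matrix ι ι K)
    (hM : IsUnit M.det) (t : ι → R) (h : ∀ p, C.Good (∑ q, C.σ (M p q) * t q)) :
    ∀ q, C.Good (t q) := by
  intro q
  have key : t q = ∑ p, C.σ (M⁻¹ q p) * (∑ q', C.σ (M p q') * t q') := by
    have h1 : ∀ p, C.σ (M⁻¹ q p) * (∑ q', C.σ (M p q') * t q')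
        = ∑ q', C.σ (M⁻¹ q p * M p q') * t q' := by
      intro p
      rw [Finset.mul_sum]
      refine Finset.sum_congr rfl fun q' _ => ?_
      rw [← mul_assoc, ← map_mul]
    rw [Finset.sum_congr rfl (fun p _ => h1 p), Finset.sum_comm]
    have h2 : ∀ q', (∑ p, C.σ (M⁻¹ q p * M p q') * t q') = C.σ ((M⁻¹ * M) q q') * t q' := by
      intro q'
      rw [Matrix.mul_apply, map_sum, Finset.sum_mul]
    rw [Finset.sum_congr rfl (fun q' _ => h2 q'), Matrix.nonsing_inv_mul M hM]
    rw [Finset.sum_congr rfl (fun q' _ =>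
      by rw [Matrix.one_apply, apply_ite C.σ, map_one, map_zero])]
    simp only [ite_mul, one_mul, zero_mul]
    rw [Finset.sum_ite_eq Finset.univ q]
    simp
  rw [key]
  exact C.good_sum _ _ fun p _ => C.good_smul _ (h p)

lemma good_u (q0 : SP n) : C.Good (C.δ (yIdx q0.1.1) * C.δ (yIdx q0.1.2)) := by
  refine C.good_solve ((Gmat n).map (algebraMap (MvPolynomial (Var n) ℂ) K))
    (GmatK_isUnit) (fun q => C.δ (yIdx q.1.1) * C.δ (yIdx q.1.2)) (fun p => ?_) q0
  exact C.eq2 p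

lemma good2 (a b : Fin (n+1)) : C.Good (C.δ (yIdx a) * C.δ (yIdx b)) := by
  rcases lt_trichotomy a b with h | rfl | h
  · exact C.good_u ⟨(a, b), h⟩
  · simpa using C.good_sq_all 1 a
  · rw [C.hcomm]
    exact C.good_u ⟨(b, a), h⟩

/-- The degree-3 monomials. -/
noncomputable def U3 : I3 n → R
  | Sum.inl (m, q) => C.δ (yIdx m) * (C.δ (yIdx q.1.1) * C.δ (yIdx q.1.2))
  | Sum.inr (m, c) => C.δ (yIdx m) * (C.δ (yIdx c) * C.δ (yIdx c))

lemma eq3 (r : I3 n) :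
    C.Good (∑ col, C.σ (algebraMap (MvPolynomial (Var n) ℂ) K (Hmat n r col)) * C.U3 col) := by
  rcases r with ⟨m, p⟩ | ⟨m, c0⟩
  · -- rows coming from `δ_m * C_p`
    have hsum : (∑ col, C.σ (algebraMap (MvPolynomial (Var n) ℂ) K
          (Hmat n (Sum.inl (m, p)) col)) * C.U3 col)
        = (∑ q : SP n, C.σ (algebraMap (MvPolynomial (Var n) ℂ) K (GA n p q))
            * C.U3 (Sum.inl (m, q)))
          + ∑ c : Fin (n+1), C.σ (algebraMap (MvPolynomial (Var n) ℂ) K (sA n p c))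
            * C.U3 (Sum.inr (m, c)) := by
      rw [Fintype.sum_sum_type]
      congr 1
      · rw [← sum_collapse m (fun m' q => C.σ (algebraMap (MvPolynomial (Var n) ℂ) K (GA n p q))
          * C.U3 (Sum.inl (m', q)))]
        refine Finset.sum_congr rfl fun z _ => ?_
        obtain ⟨m', q⟩ := z
        show C.σ (algebraMap (MvPolynomial (Var n) ℂ) K (if m' = m then GA n p q else 0)) * _ = _
        by_cases h : m' = m
        · subst h; rw [if_pos rfl, if_pos rfl]
        · rw [if_neg h, if_neg h, map_zero, map_zero, zero_mul]
      · rw [← sum_collapse m (fun m' c => C.σ (algebraMap (MvPolynomial (Var n) ℂ) K (sA n p c))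
          * C.U3 (Sum.inr (m', c)))]
        refine Finset.sum_congr rfl fun z _ => ?_
        obtain ⟨m', c⟩ := z
        show C.σ (algebraMap (MvPolynomial (Var n) ℂ) K (if m' = m then sA n p c else 0)) * _ = _
        by_cases h : m' = m
        · subst h; rw [if_pos rfl, if_pos rfl]
        · rw [if_neg h, if_neg h, map_zero, map_zero, zero_mul]
    rw [hsum]
    have hDS : C.δ (yIdx m) * (∑ a, ∑ b, C.σ (SK p a b) * (C.δ (yIdx a) * C.δ (yIdx b)))
        = ∑ a, ∑ b, C.σ (SK p a b) * (C.δ (yIdx m) * (C.δ (yIdx a) * C.δ (yIdx b))) := by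
      rw [Finset.mul_sum]
      refine Finset.sum_congr rfl fun a _ => ?_
      rw [Finset.mul_sum]
      refine Finset.sum_congr rfl fun b _ => ?_
      rw [C.push, C.D_SK, map_zero, zero_mul, add_zero]
    have hss := sum_split (n+1)
      (fun a b => C.σ (SK p a b) * (C.δ (yIdx m) * (C.δ (yIdx a) * C.δ (yIdx b))))
    have hpair : (∑ q : SP n,
          (C.σ (SK p q.1.1 q.1.2) * (C.δ (yIdx m) * (C.δ (yIdx q.1.1) * C.δ (yIdx q.1.2)))
          + C.σ (SK p q.1.2 q.1.1) * (C.δ (yIdx m) * (C.δ (yIdx q.1.2) * C.δ (yIdx q.1.1)))))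
        = ∑ q : SP n, C.σ (algebraMap (MvPolynomial (Var n) ℂ) K (GA n p q))
            * C.U3 (Sum.inl (m, q)) := by
      refine Finset.sum_congr rfl fun q _ => ?_
      rw [GA, map_add, map_add, add_mul, C.hcomm (yIdx q.1.2) (yIdx q.1.1)]
      rfl
    have hdiag : (∑ c, C.σ (SK p c c) * (C.δ (yIdx m) * (C.δ (yIdx c) * C.δ (yIdx c))))
        = ∑ c : Fin (n+1), C.σ (algebraMap (MvPolynomial (Var n) ℂ) K (sA n p c))
            * C.U3 (Sum.inr (m, c)) := by
      refine Finset.sum_congr rfl fun c _ => rfl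
    have key : (∑ q : SP n, C.σ (algebraMap (MvPolynomial (Var n) ℂ) K (GA n p q))
            * C.U3 (Sum.inl (m, q)))
          + (∑ c : Fin (n+1), C.σ (algebraMap (MvPolynomial (Var n) ℂ) K (sA n p c))
            * C.U3 (Sum.inr (m, c)))
        = C.δ (yIdx m) * Cop C.σ C.δ p.1.1 p.1.2
          - (C.σ (yK p.1.2) * (C.δ (yIdx m) * C.δ (yIdx p.1.1))
              + C.σ (C.D (yIdx m) (yK p.1.2)) * C.δ (yIdx p.1.1))
          + (C.σ (yK p.1.1) * (C.δ (yIdx m) * C.δ (yIdx p.1.2))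
              + C.σ (C.D (yIdx m) (yK p.1.1)) * C.δ (yIdx p.1.2)) := by
      rw [C.copExpand p, mul_add, mul_sub, C.push (yIdx m) (yK p.1.2), C.push (yIdx m) (yK p.1.1),
        hDS, hss, hpair, hdiag]
      abel
    rw [← hsum] at key
    rw [hsum] at key
    rw [key]
    refine C.good_add (C.good_sub (C.good_of_mem (C.mul_mem_I (C.hC _ _ p.2) _))
      (C.good_add (C.good_smul _ (C.good2 m p.1.1)) (C.good_lin _ _)))
      (C.good_add (C.good_smul _ (C.good2 m p.1.2)) (C.good_lin _ _))
  · -- identification / B rows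
    rcases lt_trichotomy m c0 with h | rfl | h
    · have hrow : ∀ col : I3 n, Hmat n (Sum.inr (m, c0)) col
          = (if col = Sum.inr (m, c0) then 1 else 0)
            - (if col = Sum.inl (c0, ⟨(m, c0), h⟩) then 1 else 0) := by
        intro col
        show (if h : m < c0 then _ else _) = _
        rw [dif_pos h]
      have hsum : (∑ col, C.σ (algebraMap (MvPolynomial (Var n) ℂ) K
            (Hmat n (Sum.inr (m, c0)) col)) * C.U3 col)
          = C.U3 (Sum.inr (m, c0)) - C.U3 (Sum.inl (c0, ⟨(m, c0), h⟩)) := by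
        have hterm : ∀ col : I3 n, C.σ (algebraMap (MvPolynomial (Var n) ℂ) K
              (Hmat n (Sum.inr (m, c0)) col)) * C.U3 col
            = (if col = Sum.inr (m, c0) then C.U3 col else 0)
              - (if col = Sum.inl (c0, ⟨(m, c0), h⟩) then C.U3 col else 0) := by
          intro col
          rw [hrow col]
          simp only [map_sub, apply_ite (algebraMap (MvPolynomial (Var n) ℂ) K),
            apply_ite C.σ, map_one, map_zero, sub_mul, ite_mul, one_mul, zero_mul]
        rw [Finset.sum_congr rfl fun col _ => hterm col, Finset.sum_sub_distrib,
          Finset.sum_ite_eq' Finset.univ, Finset.sum_ite_eq' Finset.univ]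
        simp
      rw [hsum]
      have : C.U3 (Sum.inr (m, c0)) = C.U3 (Sum.inl (c0, ⟨(m, c0), h⟩)) := by
        show C.δ (yIdx m) * (C.δ (yIdx c0) * C.δ (yIdx c0))
          = C.δ (yIdx c0) * (C.δ (yIdx m) * C.δ (yIdx c0))
        rw [← mul_assoc, ← mul_assoc, C.hcomm (yIdx c0) (yIdx m)]
      rw [this, sub_self]
      exact C.good_zero
    · have hrow : ∀ col : I3 n, Hmat n (Sum.inr (m, m)) col
          = (match col with
              | Sum.inr (m', _) => if m' = m then (1 : MvPolynomial (Var n) ℂ) else 0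
              | Sum.inl _ => 0) := by
        intro col
        show (if h : m < m then _ else _) = _
        rw [dif_neg (lt_irrefl m), dif_neg (lt_irrefl m)]
      have hrow2l : ∀ z : Fin (n+1) × SP n,
          Hmat n (Sum.inr (m, m)) (Sum.inl z) = 0 := fun z => by rw [hrow]
      have hrow2r : ∀ z : Fin (n+1) × Fin (n+1),
          Hmat n (Sum.inr (m, m)) (Sum.inr z) = (if z.1 = m then 1 else 0) := fun z => by
        rw [hrow]
      have hsum : (∑ col, C.σ (algebraMap (MvPolynomial (Var n) ℂ) K
            (Hmat n (Sum.inr (m, m)) col)) * C.U3 col)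
          = ∑ c : Fin (n+1), C.U3 (Sum.inr (m, c)) := by
        rw [Fintype.sum_sum_type]
        have h1 : (∑ z : Fin (n+1) × SP n, C.σ (algebraMap (MvPolynomial (Var n) ℂ) K
            (Hmat n (Sum.inr (m, m)) (Sum.inl z))) * C.U3 (Sum.inl z)) = 0 := by
          refine Finset.sum_eq_zero fun z _ => ?_
          rw [hrow2l z, map_zero, map_zero, zero_mul]
        rw [h1, zero_add]
        rw [← sum_collapse m (fun m' c => C.U3 (Sum.inr (m', c)))]
        refine Finset.sum_congr rfl fun z _ => ?_
        rw [hrow2r z]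
        obtain ⟨m', c⟩ := z
        by_cases hm : m' = m
        · rw [if_pos hm, map_one, map_one, one_mul, if_pos hm]
        · rw [if_neg hm, map_zero, map_zero, zero_mul, if_neg hm]
      rw [hsum]
      have key : (∑ c : Fin (n+1), C.U3 (Sum.inr (m, c)))
          = C.δ (yIdx m) * Bop C.σ C.δ + C.σ (rK n K * rK n K) * C.δ (yIdx m) := by
        rw [Bop, mul_sub, C.hrel (yIdx m) (rK n K * rK n K), C.D_r2, map_zero, add_zero,
          Finset.mul_sum]
        have : ∀ c : Fin (n+1), C.δ (yIdx m) * (C.δ (yIdx c) * C.δ (yIdx c))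
            = C.U3 (Sum.inr (m, c)) := fun c => rfl
        rw [Finset.sum_congr rfl fun c _ => this c]
        abel
      rw [key]
      exact C.good_add (C.good_of_mem (C.mul_mem_I C.hB _)) (C.good_lin _ _)
    · have hrow : ∀ col : I3 n, Hmat n (Sum.inr (m, c0)) col
          = (if col = Sum.inr (m, c0) then 1 else 0)
            - (if col = Sum.inl (c0, ⟨(c0, m), h⟩) then 1 else 0) := by
        intro col
        show (if h : m < c0 then _ else _) = _
        rw [dif_neg (not_lt.mpr h.le), dif_pos h]
      have hsum : (∑ col, C.σ (algebraMap (MvPolynomial (Var n) ℂ) K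
            (Hmat n (Sum.inr (m, c0)) col)) * C.U3 col)
          = C.U3 (Sum.inr (m, c0)) - C.U3 (Sum.inl (c0, ⟨(c0, m), h⟩)) := by
        have hterm : ∀ col : I3 n, C.σ (algebraMap (MvPolynomial (Var n) ℂ) K
              (Hmat n (Sum.inr (m, c0)) col)) * C.U3 col
            = (if col = Sum.inr (m, c0) then C.U3 col else 0)
              - (if col = Sum.inl (c0, ⟨(c0, m), h⟩) then C.U3 col else 0) := by
          intro col
          rw [hrow col]
          simp only [map_sub, apply_ite (algebraMap (MvPolynomial (Var n) ℂ) K),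
            apply_ite C.σ, map_one, map_zero, sub_mul, ite_mul, one_mul, zero_mul]
        rw [Finset.sum_congr rfl fun col _ => hterm col, Finset.sum_sub_distrib,
          Finset.sum_ite_eq' Finset.univ, Finset.sum_ite_eq' Finset.univ]
        simp
      rw [hsum]
      have : C.U3 (Sum.inr (m, c0)) = C.U3 (Sum.inl (c0, ⟨(c0, m), h⟩)) := by
        show C.δ (yIdx m) * (C.δ (yIdx c0) * C.δ (yIdx c0))
          = C.δ (yIdx c0) * (C.δ (yIdx c0) * C.δ (yIdx m))
        rw [C.hcomm (yIdx c0) (yIdx m), ← mul_assoc, ← mul_assoc, C.hcomm (yIdx c0) (yIdx m)]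
      rw [this, sub_self]
      exact C.good_zero

lemma good3v (m c : Fin (n+1)) : C.Good (C.δ (yIdx m) * (C.δ (yIdx c) * C.δ (yIdx c))) :=
  C.good_solve ((Matrix.of (Hmat n)).map (algebraMap (MvPolynomial (Var n) ℂ) K))
    HmatK_isUnit C.U3 (fun r => C.eq3 r) (Sum.inr (m, c))

lemma good3w (m : Fin (n+1)) (q : SP n) :
    C.Good (C.δ (yIdx m) * (C.δ (yIdx q.1.1) * C.δ (yIdx q.1.2))) :=
  C.good_solve ((Matrix.of (Hmat n)).map (algebraMap (MvPolynomial (Var n) ℂ) K))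
    HmatK_isUnit C.U3 (fun r => C.eq3 r) (Sum.inl (m, q))

lemma good3 (a b c : Fin (n+1)) :
    C.Good (C.δ (yIdx a) * (C.δ (yIdx b) * C.δ (yIdx c))) := by
  rcases lt_trichotomy b c with h | rfl | h
  · exact C.good3w a ⟨(b, c), h⟩
  · exact C.good3v a b
  · rw [C.hcomm (yIdx b) (yIdx c)]
    exact C.good3w a ⟨(c, b), h⟩

lemma good_natCast : C.Good ((n : ℕ) : R) := by
  have h := C.good_const ((n : ℕ) : K)
  rwa [map_natCast] at h

lemma good_mul_y (m : Fin (n+1)) {f : R} (hf : C.Good f) : C.Good (C.δ (yIdx m) * f) := by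
  obtain ⟨c0, c1, c2, hmem⟩ := hf
  have h2 : C.δ (yIdx m) * f - C.δ (yIdx m) * C.NF c0 c1 c2 ∈ C.I := by
    rw [← mul_sub]; exact C.mul_mem_I hmem _
  refine C.good_congr h2 ?_
  rw [NF, mul_add, mul_add]
  refine C.good_add (C.good_add ?_ ?_) ?_
  · rw [C.hrel]
    exact C.good_add (C.good_lin c0 m) (C.good_const _)
  · rw [Finset.mul_sum]
    refine C.good_sum _ _ fun i _ => ?_
    rw [C.push]
    exact C.good_add (C.good_smul _ (C.good2 m i)) (C.good_lin _ i)
  · rw [Finset.mul_sum]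
    refine C.good_sum _ _ fun i _ => ?_
    rw [C.push]
    exact C.good_add (C.good_smul _ (C.good3v m i.castSucc)) (C.good_sq' _ i)

/-- Reduction of a right factor `∂_x` using the operator `A`. -/
lemma good_dx_aux (p : {p : Fin (n+1) × Fin (n+1) // p.1 ≤ p.2}) (g : R)
    (hg : C.Good (g * (C.δ (yIdx p.1.1) * C.δ (yIdx p.1.2)))) :
    C.Good (g * C.δ (Sum.inl p)) := by
  refine C.good_congr ?_ hg
  have h : g * C.δ (Sum.inl p) - g * (C.δ (yIdx p.1.1) * C.δ (yIdx p.1.2))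
      = g * Aop C.σ C.δ p := by
    rw [Aop, mul_sub]
  rw [h]; exact C.mul_mem_I (C.hA p) g

lemma good_mul_x (p : {p : Fin (n+1) × Fin (n+1) // p.1 ≤ p.2}) {f : R} (hf : C.Good f) :
    C.Good (C.δ (Sum.inl p) * f) := by
  obtain ⟨c0, c1, c2, hmem⟩ := hf
  have h2 : C.δ (Sum.inl p) * f - C.δ (Sum.inl p) * C.NF c0 c1 c2 ∈ C.I := by
    rw [← mul_sub]; exact C.mul_mem_I hmem _
  refine C.good_congr h2 ?_
  rw [NF, mul_add, mul_add]
  refine C.good_add (C.good_add ?_ ?_) ?_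
  · rw [C.hrel (Sum.inl p) c0]
    refine C.good_add ?_ (C.good_const _)
    exact C.good_dx_aux p (C.σ c0) (C.good_smul _ (C.good2 _ _))
  · rw [Finset.mul_sum]
    refine C.good_sum _ _ fun i _ => ?_
    rw [C.push (Sum.inl p)]
    refine C.good_add ?_ (C.good_lin _ i)
    rw [C.hcomm (Sum.inl p) (yIdx i), ← mul_assoc]
    refine C.good_dx_aux p _ ?_
    rw [mul_assoc]
    exact C.good_smul _ (C.good3 i _ _)
  · rw [Finset.mul_sum]
    refine C.good_sum _ _ fun i _ => ?_
    rw [C.push (Sum.inl p)]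
    refine C.good_add ?_ (C.good_sq' _ i)
    have hc : C.δ (Sum.inl p) * (C.δ (yIdx i.castSucc) * C.δ (yIdx i.castSucc))
        = (C.δ (yIdx i.castSucc) * C.δ (yIdx i.castSucc)) * C.δ (Sum.inl p) := by
      rw [← mul_assoc, C.hcomm (Sum.inl p) (yIdx i.castSucc), mul_assoc,
        C.hcomm (Sum.inl p) (yIdx i.castSucc), ← mul_assoc]
    rw [hc, ← mul_assoc]
    refine C.good_dx_aux p _ ?_
    rw [mul_assoc, mul_assoc]
    refine C.good_smul _ (C.good_mul_y _ (C.good_mul_y _ (C.good2 _ _)))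

/-- The lower order part of the Euler operator. -/
noncomputable def LL : R :=
  (2 : R) * (∑ p : {p : Fin (n+1) × Fin (n+1) // p.1 ≤ p.2},
      C.σ (xK p.1.1 p.1.2) * (C.δ (yIdx p.1.1) * C.δ (yIdx p.1.2)))
    + (∑ i, C.σ (yK i) * C.δ (yIdx i)) + (n : R)

lemma Eop_eq : Eop C.σ C.δ = C.σ (rK n K) * C.δ rIdx - C.LL := by
  rw [Eop, LL]; abel

lemma good_LL : C.Good C.LL := by
  refine C.good_add (C.good_add ?_ ?_) C.good_natCast
  · rw [two_mul]
    refine C.good_add ?_ ?_ <;>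
      exact C.good_sum _ _ fun p _ => C.good_smul _ (C.good2 _ _)
  · exact C.good_sum _ _ fun i _ => C.good_lin _ i

lemma good_dr : C.Good (C.σ (rK n K) * C.δ rIdx) := by
  refine C.good_congr ?_ C.good_LL
  rw [← C.Eop_eq]
  exact C.hE

lemma good_mul_r {f : R} (hf : C.Good f) : C.Good (C.δ rIdx * f) := by
  have hry : ∀ m : Fin (n+1), C.δ rIdx * C.δ (yIdx m) = C.δ (yIdx m) * C.δ rIdx :=
    fun m => C.hcomm _ _
  -- `Good (m * δ_r)` for the three basis monomials
  have key : ∀ (m : R), C.Good (m * C.LL) → (m * C.σ (rK n K) = C.σ (rK n K) * m)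
      → C.Good (m * C.δ rIdx) := by
    intro m hLL hcommr
    have hmem : C.σ (rK n K) * (m * C.δ rIdx) - m * C.LL ∈ C.I := by
      have heq : C.σ (rK n K) * (m * C.δ rIdx) - m * C.LL = m * Eop C.σ C.δ := by
        rw [C.Eop_eq, mul_sub]
        congr 1
        rw [← mul_assoc, ← hcommr, mul_assoc]
      rw [heq]; exact C.mul_mem_I C.hE m
    refine C.good_unsmul rK_ne (C.good_congr hmem hLL)
  obtain ⟨c0, c1, c2, hmem⟩ := hf
  have h2 : C.δ rIdx * f - C.δ rIdx * C.NF c0 c1 c2 ∈ C.I := by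
    rw [← mul_sub]; exact C.mul_mem_I hmem _
  refine C.good_congr h2 ?_
  rw [NF, mul_add, mul_add]
  refine C.good_add (C.good_add ?_ ?_) ?_
  · rw [C.hrel]
    refine C.good_add ?_ (C.good_const _)
    -- Good (σ c0 * δ_r)
    have h3 := key 1 (by rw [one_mul]; exact C.good_LL) (by rw [one_mul, mul_one])
    rw [one_mul] at h3
    exact C.good_smul _ h3
  · rw [Finset.mul_sum]
    refine C.good_sum _ _ fun i _ => ?_
    rw [C.push]
    refine C.good_add ?_ (C.good_lin _ i)
    rw [hry i, ← mul_assoc]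
    have h3 := key (C.δ (yIdx i)) (C.good_mul_y i C.good_LL)
      (C.comm_sigma (C.D_r i))
    rw [mul_assoc]
    exact C.good_smul _ h3
  · rw [Finset.mul_sum]
    refine C.good_sum _ _ fun i _ => ?_
    rw [C.push]
    refine C.good_add ?_ (C.good_sq' _ i)
    have hc : C.δ rIdx * (C.δ (yIdx i.castSucc) * C.δ (yIdx i.castSucc))
        = (C.δ (yIdx i.castSucc) * C.δ (yIdx i.castSucc)) * C.δ rIdx := by
      rw [← mul_assoc, C.hcomm rIdx (yIdx i.castSucc), mul_assoc,
        C.hcomm rIdx (yIdx i.castSucc), ← mul_assoc]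
    have h3 : C.Good ((C.δ (yIdx i.castSucc) * C.δ (yIdx i.castSucc)) * C.δ rIdx) := by
      refine key _ ?_ ?_
      · rw [mul_assoc]
        exact C.good_mul_y _ (C.good_mul_y _ C.good_LL)
      · rw [mul_assoc, C.comm_sigma (C.D_r i.castSucc), ← mul_assoc,
          C.comm_sigma (C.D_r i.castSucc), mul_assoc]
    rw [hc]
    exact C.good_smul _ h3

lemma good_mul_v (v : Var n) {f : R} (hf : C.Good f) : C.Good (C.δ v * f) := by
  rcases v with p | i | u
  · exact C.good_mul_x p hf
  · exact C.good_mul_y i hf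
  · exact C.good_mul_r hf

lemma good_pow_mul (v : Var n) (k : ℕ) : ∀ {f : R}, C.Good f → C.Good (C.δ v ^ k * f) := by
  induction k with
  | zero => intro f hf; simpa using hf
  | succ k ih =>
      intro f hf
      rw [pow_succ, mul_assoc]
      exact ih (C.good_mul_v v hf)

lemma good_noncommProd (β : (Var n) →₀ ℕ) {f : R} (hf : C.Good f) :
    ∀ (s : Finset (Var n)) (comm : (↑s : Set (Var n)).Pairwise
      (Function.onFun Commute (fun v => C.δ v ^ β v))),
      C.Good (s.noncommProd (fun v => C.δ v ^ β v) comm * f) := by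
  intro s
  induction s using Finset.cons_induction with
  | empty => intro comm; simpa using hf
  | cons a s ha ih =>
      intro comm
      rw [Finset.noncommProd_cons, mul_assoc]
      exact C.good_pow_mul a _ (ih _)

end Ctx

end Aux

/-- Theorem 4.2: in the rational Weyl algebra `R`, modulo the left ideal `I` generated by
the operators `A_ij`, `B`, `C_ij (i<j)` and `E`, every element of `R` is congruent to a
`C(X)`-linear combination of the `2n+3` monomials `1, ∂_{y_1},…,∂_{y_{n+1}},
∂_{y_1}²,…,∂_{y_n}²`; in particular `I` is zero-dimensional with
`dim_{C(X)} R/I ≤ 2n+3`. -/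
theorem zero_dimensionality
    [IsFractionRing (MvPolynomial (Var n) ℂ) K]
    [Algebra ℂ K] [IsScalarTower ℂ (MvPolynomial (Var n) ℂ) K]
    (D : Var n → Derivation ℂ K K)
    (hD : ∀ v w : Var n, D v (algebraMap (MvPolynomial (Var n) ℂ) K (MvPolynomial.X w))
      = if v = w then 1 else 0)
    (σ : K →+* R) (hσ : Function.Injective σ) (δ : Var n → R)
    (hcomm : ∀ v w, δ v * δ w = δ w * δ v)
    (hrel : ∀ (v : Var n) (a : K), δ v * σ a = σ a * δ v + σ (D v a))
    (hspan : ∀ f : R, ∃ c : ((Var n) →₀ ℕ) →₀ K,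
      f = c.sum fun β a => σ a *
        (Finset.univ : Finset (Var n)).noncommProd (fun v => δ v ^ β v)
          (fun a _ b _ _ => Commute.pow_pow (hcomm a b) _ _))
    (I : Submodule R R)
    (hI : I = Submodule.span R
      (Set.range (Aop σ δ) ∪ {Bop σ δ, Eop σ δ}
        ∪ {w | ∃ i j : Fin (n+1), i < j ∧ w = Cop σ δ i j}))
    (f : R) :
    ∃ (c0 : K) (c1 : Fin (n+1) → K) (c2 : Fin n → K),
      f - (σ c0 + (∑ i, σ (c1 i) * δ (yIdx i))
          + ∑ i : Fin n, σ (c2 i) * (δ (yIdx i.castSucc) * δ (yIdx i.castSucc))) ∈ I := by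
  have hAmem : ∀ p, Aop σ δ p ∈ I := by
    intro p
    rw [hI]
    exact Submodule.subset_span (Or.inl (Or.inl ⟨p, rfl⟩))
  have hBmem : Bop σ δ ∈ I := by
    rw [hI]
    exact Submodule.subset_span (Or.inl (Or.inr (Set.mem_insert _ _)))
  have hEmem : Eop σ δ ∈ I := by
    rw [hI]
    exact Submodule.subset_span (Or.inl (Or.inr (Set.mem_insert_of_mem _ rfl)))
  have hCmem : ∀ i j : Fin (n+1), i < j → Cop σ δ i j ∈ I := by
    intro i j hij
    rw [hI]
    exact Submodule.subset_span (Or.inr ⟨i, j, hij, rfl⟩)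
  let C : Ctx n K R := ⟨D, hD, σ, δ, hcomm, hrel, I, hAmem, hBmem, hCmem, hEmem⟩
  obtain ⟨c, hc⟩ := hspan f
  have hgood : C.Good f := by
    rw [hc, Finsupp.sum]
    refine C.good_sum _ _ fun β _ => ?_
    have h1 := C.good_noncommProd β C.good_one Finset.univ
      (fun a _ b _ _ => Commute.pow_pow (hcomm a b) _ _)
    rw [mul_one] at h1
    exact C.good_smul _ h1
  obtain ⟨c0, c1, c2, hm⟩ := hgood
  exact ⟨c0, c1, c2, hm⟩


end FisherBinghamWeyl
end

section
/- Let f(x) = exp(−x+1) ∫_0^∞ exp(xt − t³) dt. Then f satisfies the inhomogeneous ordinary differential equation 3f''(x) + 6f'(x) + (3 − x) f(x) = exp(−x+1). -/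
open MeasureTheory Set Filter Real Topology Asymptotics

lemma airy_tendsto (n : ℕ) (x : ℝ) :
    Tendsto (fun t : ℝ => t ^ n * Real.exp (x * t - t ^ 3)) atTop (𝓝 0) := by
  have h1 : Tendsto (fun t : ℝ => t ^ n * Real.exp (-t)) atTop (𝓝 0) :=
    tendsto_pow_mul_exp_neg_atTop_nhds_zero n
  apply squeeze_zero' ?_ ?_ h1
  · filter_upwards [eventually_ge_atTop (0:ℝ)] with t ht
    positivity
  · have h2 : Tendsto (fun t : ℝ => t ^ 2) atTop atTop := tendsto_pow_atTop (by norm_num)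
    filter_upwards [eventually_ge_atTop (0:ℝ), h2.eventually_ge_atTop (x + 1)] with t ht ht2
    have h : x * t - t ^ 3 ≤ -t := by nlinarith
    gcongr

lemma airy_int (n : ℕ) (x : ℝ) :
    IntegrableOn (fun t : ℝ => t ^ n * Real.exp (x * t - t ^ 3)) (Ioi 0) := by
  apply integrable_of_isBigO_exp_neg (b := 1) one_pos
  · exact (Continuous.continuousOn (by fun_prop))
  · apply IsLittleO.isBigO
    rw [isLittleO_iff_tendsto (fun t h => absurd h (Real.exp_ne_zero _))]
    have := airy_tendsto n (x + 1)
    apply this.congr' ?_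
    filter_upwards with t
    rw [eq_div_iff (Real.exp_ne_zero _), mul_assoc, ← Real.exp_add]
    ring_nf

noncomputable def airyG (n : ℕ) (x : ℝ) : ℝ := ∫ t in Ioi (0:ℝ), t ^ n * Real.exp (x * t - t ^ 3)

lemma airy_hasDerivAt (n : ℕ) (x : ℝ) :
    HasDerivAt (airyG n) (airyG (n + 1) x) x := by
  have key := hasDerivAt_integral_of_dominated_loc_of_deriv_le (μ := volume.restrict (Ioi 0))
      (F := fun y t => t ^ n * Real.exp (y * t - t ^ 3))
      (F' := fun y t => t ^ (n + 1) * Real.exp (y * t - t ^ 3))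
      (bound := fun t => t ^ (n + 1) * Real.exp ((x + 1) * t - t ^ 3))
      (x₀ := x) (s := Metric.ball x 1) (Metric.ball_mem_nhds x one_pos)
      (Eventually.of_forall fun y => (Continuous.aestronglyMeasurable (by fun_prop)))
      (airy_int n x)
      (Continuous.aestronglyMeasurable (by fun_prop))
      ?_ (airy_int (n + 1) (x + 1)) ?_
  · exact key.2
  · rw [ae_restrict_iff' measurableSet_Ioi]
    filter_upwards with t ht y hy
    rw [Metric.mem_ball, Real.dist_eq] at hy
    have ht0 : (0:ℝ) < t := ht
    have : y ≤ x + 1 := by cases abs_lt.1 hy; linarith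
    rw [Real.norm_eq_abs, abs_mul, abs_pow, abs_of_pos ht0, Real.abs_exp]
    gcongr
  · filter_upwards with t y _
    have h1 : HasDerivAt (fun y : ℝ => y * t - t ^ 3) t y := by
      simpa using ((hasDerivAt_id y).mul_const t).sub_const (t ^ 3)
    have := (h1.exp).const_mul (t ^ n)
    exact this.congr_deriv (by ring)

lemma airy_key (x : ℝ) : 3 * airyG 2 x - x * airyG 0 x = 1 := by
  have hftc : ∫ t in Ioi (0:ℝ), (x - 3 * t ^ 2) * Real.exp (x * t - t ^ 3)
      = 0 - Real.exp (x * 0 - 0 ^ 3) := by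
    apply integral_Ioi_of_hasDerivAt_of_tendsto'
      (f := fun t => Real.exp (x * t - t ^ 3))
    · intro t _
      have h1 : HasDerivAt (fun t : ℝ => x * t - t ^ 3) (x - 3 * t ^ 2) t := by
        have := ((hasDerivAt_id t).const_mul x).sub (hasDerivAt_pow 3 t)
        exact this.congr_deriv (by simp)
      have := h1.exp
      exact this.congr_deriv (by ring)
    · have h0 := (airy_int 0 x).const_mul x
      have h2 := (airy_int 2 x).const_mul 3
      apply Integrable.congr (h0.sub h2)
      filter_upwards with t
      simp only [pow_zero, one_mul, Pi.sub_apply]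
      ring
    · have := airy_tendsto 0 x
      simpa using this
  have hsplit : ∫ t in Ioi (0:ℝ), (x - 3 * t ^ 2) * Real.exp (x * t - t ^ 3)
      = x * airyG 0 x - 3 * airyG 2 x := by
    unfold airyG
    rw [show (fun t : ℝ => (x - 3 * t ^ 2) * Real.exp (x * t - t ^ 3))
        = fun t : ℝ => x * (t ^ 0 * Real.exp (x * t - t ^ 3))
          - 3 * (t ^ 2 * Real.exp (x * t - t ^ 3)) from by funext t; ring]
    rw [integral_sub ((airy_int 0 x).const_mul x) ((airy_int 2 x).const_mul 3),
      MeasureTheory.integral_const_mul, MeasureTheory.integral_const_mul]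
  rw [hsplit] at hftc
  simp at hftc
  linarith

/-- The function `f(x) = exp(−x+1) ∫_0^∞ exp(xt − t³) dt` satisfies the inhomogeneous
ODE `3f'' + 6f' + (3 − x)f = exp(−x+1)`. -/
theorem airy_type_ode (f : ℝ → ℝ)
    (hf : ∀ x, f x = Real.exp (-x + 1) * ∫ t in Set.Ioi (0:ℝ), Real.exp (x * t - t ^ 3))
    (x : ℝ) :
    3 * deriv (deriv f) x + 6 * deriv f x + (3 - x) * f x = Real.exp (-x + 1) := by
  have hG0 : ∀ y, f y = Real.exp (-y + 1) * airyG 0 y := by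
    intro y; rw [hf y]; unfold airyG; simp
  have hfe : f = fun y => Real.exp (-y + 1) * airyG 0 y := funext hG0
  have hexp : ∀ y : ℝ, HasDerivAt (fun y : ℝ => Real.exp (-y + 1)) (-Real.exp (-y + 1)) y := by
    intro y
    have h : HasDerivAt (fun y : ℝ => -y + 1) (-1) y := (hasDerivAt_id y).neg.add_const 1
    simpa using h.exp
  have hd1 : ∀ y, HasDerivAt f (Real.exp (-y + 1) * (airyG 1 y - airyG 0 y)) y := by
    intro y
    rw [hfe]
    have := (hexp y).mul (airy_hasDerivAt 0 y)
    exact this.congr_deriv (by ring)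
  have hderiv1 : deriv f = fun y => Real.exp (-y + 1) * (airyG 1 y - airyG 0 y) :=
    funext fun y => (hd1 y).deriv
  have hd2 : HasDerivAt (deriv f)
      (Real.exp (-x + 1) * (airyG 2 x - 2 * airyG 1 x + airyG 0 x)) x := by
    rw [hderiv1]
    have hsub := (airy_hasDerivAt 1 x).sub (airy_hasDerivAt 0 x)
    have := (hexp x).mul hsub
    exact this.congr_deriv (by simp only [Pi.sub_apply]; ring)
  rw [hd2.deriv, hderiv1, hG0 x]
  have key := airy_key x
  linear_combination Real.exp (-x + 1) * key
end
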